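/- For each x ∈ ℝⁿ and each pair (i,j) with 1 ≤ i,j ≤ n, there is a unique vector Γᵢⱼ(x) ∈ ℝⁿ satisfying the Koszul identity 2 g₀(x)(Γᵢⱼ(x), e_k) = ∂ᵢ(g₀(·)(e_j,e_k))(x) + ∂ⱼ(g₀(·)(e_i,e_k))(x) − ∂_k(g₀(·)(e_i,e_j))(x) for every k ∈ {1,…,n}, where ∂ᵢ denotes the directional derivative in the direction eᵢ. Moreover these vectors are: Γ₁₁(x) = −x₃ e₄, Γ₁₃(x) = Γ₃₁(x) = x₃ e₂, and Γᵢⱼ(x) = 0 for every other pair (i,j). -/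
import Mathlib


/-- The symmetric bilinear form `g₀(x)(v,w) = v₁w₂ + v₂w₁ + x₃²v₁w₁ + v₃w₄ + v₄w₃
    + Σ_{j=5}^{n} ε_j v_j w_j` (1-based indices; here indices are 0-based),
    where `ε_j = 1` for positions `5 ≤ j ≤ 4+s` and `ε_j = -1` otherwise. -/
def g0 (n : ℕ) (hn : 4 ≤ n) (s : ℕ) (x v w : Fin n → ℝ) : ℝ :=
  v ⟨0, by omega⟩ * w ⟨1, by omega⟩ + v ⟨1, by omega⟩ * w ⟨0, by omega⟩
    + (x ⟨2, by omega⟩) ^ 2 * v ⟨0, by omega⟩ * w ⟨0, by omega⟩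
    + v ⟨2, by omega⟩ * w ⟨3, by omega⟩ + v ⟨3, by omega⟩ * w ⟨2, by omega⟩
    + ∑ j : Fin n, if 4 ≤ (j : ℕ) then
        (if (j : ℕ) < 4 + s then (1 : ℝ) else -1) * v j * w j else 0

/-- The `i`-th standard basis vector `eᵢ` of `ℝⁿ` (0-based). -/
def stdBasis (n : ℕ) (i : Fin n) : Fin n → ℝ := fun k => if k = i then 1 else 0

/-- The Christoffel vectors of `g₀`: `Γ₁₁(x) = -x₃ e₄`, `Γ₁₃(x) = Γ₃₁(x) = x₃ e₂`,
and `Γᵢⱼ(x) = 0` otherwise (1-based indices; here `i j` are 0-based, so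
`Γ₀₀(x) = -x₂e₃` and `Γ₀₂(x) = Γ₂₀(x) = x₂e₁`). -/
def Gamma (n : ℕ) (hn : 4 ≤ n) (i j : Fin n) (x : Fin n → ℝ) : Fin n → ℝ :=
  fun k =>
    if (i : ℕ) = 0 ∧ (j : ℕ) = 0 ∧ (k : ℕ) = 3 then -x ⟨2, by omega⟩
    else if (((i : ℕ) = 0 ∧ (j : ℕ) = 2) ∨ ((i : ℕ) = 2 ∧ (j : ℕ) = 0)) ∧ (k : ℕ) = 1 then
      x ⟨2, by omega⟩
    else 0

lemma g0_std (n : ℕ) (hn : 4 ≤ n) (s : ℕ) (x v : Fin n → ℝ) (k : Fin n) :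
    g0 n hn s x v (stdBasis n k) =
      if (k : ℕ) = 0 then v ⟨1, by omega⟩ + x ⟨2, by omega⟩ ^ 2 * v ⟨0, by omega⟩
      else if (k : ℕ) = 1 then v ⟨0, by omega⟩
      else if (k : ℕ) = 2 then v ⟨3, by omega⟩
      else if (k : ℕ) = 3 then v ⟨2, by omega⟩
      else (if (k : ℕ) < 4 + s then (1 : ℝ) else -1) * v k := by
  have hsum : (∑ j : Fin n, if 4 ≤ (j : ℕ) then
      (if (j : ℕ) < 4 + s then (1 : ℝ) else -1) * v j * stdBasis n k j else 0)
      = if 4 ≤ (k : ℕ) then (if (k : ℕ) < 4 + s then (1 : ℝ) else -1) * v k else 0 := by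
    have h : ∀ j : Fin n, (if 4 ≤ (j : ℕ) then
        (if (j : ℕ) < 4 + s then (1 : ℝ) else -1) * v j * stdBasis n k j else 0)
        = if j = k then (if 4 ≤ (k : ℕ) then (if (k : ℕ) < 4 + s then (1 : ℝ) else -1) * v k else 0) else 0 := by
      intro j
      by_cases hj : j = k
      · subst hj; simp [stdBasis]
      · simp [stdBasis, hj]
    rw [Finset.sum_congr rfl (fun j _ => h j), Finset.sum_ite_eq' Finset.univ k]
    simp
  unfold g0
  rw [hsum]
  have e0 : stdBasis n k ⟨0, by omega⟩ = if (k : ℕ) = 0 then 1 else 0 := by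
    simp [stdBasis, Fin.ext_iff, eq_comm]
  have e1 : stdBasis n k ⟨1, by omega⟩ = if (k : ℕ) = 1 then 1 else 0 := by
    simp [stdBasis, Fin.ext_iff, eq_comm]
  have e2 : stdBasis n k ⟨2, by omega⟩ = if (k : ℕ) = 2 then 1 else 0 := by
    simp [stdBasis, Fin.ext_iff, eq_comm]
  have e3 : stdBasis n k ⟨3, by omega⟩ = if (k : ℕ) = 3 then 1 else 0 := by
    simp [stdBasis, Fin.ext_iff, eq_comm]
  rw [e0, e1, e2, e3]
  split_ifs <;> first | (exfalso; omega) | ring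

lemma fderiv_g0 (n : ℕ) (hn : 4 ≤ n) (s : ℕ) (v w x d : Fin n → ℝ) :
    fderiv ℝ (fun y => g0 n hn s y v w) x d
      = 2 * x ⟨2, by omega⟩ * d ⟨2, by omega⟩ * (v ⟨0, by omega⟩ * w ⟨0, by omega⟩) := by
  have hfun : (fun y : Fin n → ℝ => g0 n hn s y v w)
      = fun y => (y ⟨2, by omega⟩) ^ 2 * (v ⟨0, by omega⟩ * w ⟨0, by omega⟩)
          + g0 n hn s 0 v w := by
    funext y; simp only [g0, Pi.zero_apply]; ring
  rw [hfun]
  set L : (Fin n → ℝ) →L[ℝ] ℝ := ContinuousLinearMap.proj ⟨2, by omega⟩ with hL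
  have h1 : HasFDerivAt (fun y : Fin n → ℝ => y ⟨2, by omega⟩) L x :=
    L.hasFDerivAt
  have h2 : HasFDerivAt
      (fun y : Fin n → ℝ => (y ⟨2, by omega⟩) ^ 2 * (v ⟨0, by omega⟩ * w ⟨0, by omega⟩)
        + g0 n hn s 0 v w)
      (((v ⟨0, by omega⟩ * w ⟨0, by omega⟩) • (x ⟨2, by omega⟩ • L + x ⟨2, by omega⟩ • L))) x := by
    have := ((h1.mul h1).mul_const (v ⟨0, by omega⟩ * w ⟨0, by omega⟩)).add_const
      (g0 n hn s 0 v w)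
    have heq : (fun y : Fin n → ℝ => (y ⟨2, by omega⟩) ^ 2 * (v ⟨0, by omega⟩ * w ⟨0, by omega⟩)
        + g0 n hn s 0 v w)
        = (fun y : Fin n → ℝ => y ⟨2, by omega⟩ * y ⟨2, by omega⟩ * (v ⟨0, by omega⟩ * w ⟨0, by omega⟩)
        + g0 n hn s 0 v w) := by
      funext y; ring
    rw [heq]; exact this
  rw [h2.fderiv]
  simp [ContinuousLinearMap.smul_apply, ContinuousLinearMap.add_apply,
    ContinuousLinearMap.proj_apply, hL]
  ring

lemma stdBasis_mk (n : ℕ) (i : Fin n) (a : ℕ) (h : a < n) :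
    stdBasis n i ⟨a, h⟩ = if a = (i : ℕ) then 1 else 0 := by
  simp [stdBasis, Fin.ext_iff]


set_option maxHeartbeats 1000000

/-- For each `x` and each `(i,j)` there is a unique vector `Γᵢⱼ(x)` satisfying the
Koszul identity `2 g₀(x)(Γᵢⱼ(x), e_k) = ∂ᵢ(g₀(eⱼ,e_k))(x) + ∂ⱼ(g₀(eᵢ,e_k))(x)
− ∂_k(g₀(eᵢ,eⱼ))(x)` for all `k`; moreover these vectors are given by `Gamma`. -/
theorem koszul_christoffel (p q : ℕ) (hp : 2 ≤ p) (hpq : p ≤ q) (hq : 2 < q)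
    (x : Fin (p + q) → ℝ) (i j : Fin (p + q)) :
    (∃! G : Fin (p + q) → ℝ, ∀ k : Fin (p + q),
      2 * g0 (p + q) (by omega) (q - 2) x G (stdBasis (p + q) k) =
        fderiv ℝ (fun y => g0 (p + q) (by omega) (q - 2) y
            (stdBasis (p + q) j) (stdBasis (p + q) k)) x (stdBasis (p + q) i)
        + fderiv ℝ (fun y => g0 (p + q) (by omega) (q - 2) y
            (stdBasis (p + q) i) (stdBasis (p + q) k)) x (stdBasis (p + q) j)
        - fderiv ℝ (fun y => g0 (p + q) (by omega) (q - 2) y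
            (stdBasis (p + q) i) (stdBasis (p + q) j)) x (stdBasis (p + q) k)) ∧
    (∀ k : Fin (p + q),
      2 * g0 (p + q) (by omega) (q - 2) x (Gamma (p + q) (by omega) i j x)
          (stdBasis (p + q) k) =
        fderiv ℝ (fun y => g0 (p + q) (by omega) (q - 2) y
            (stdBasis (p + q) j) (stdBasis (p + q) k)) x (stdBasis (p + q) i)
        + fderiv ℝ (fun y => g0 (p + q) (by omega) (q - 2) y
            (stdBasis (p + q) i) (stdBasis (p + q) k)) x (stdBasis (p + q) j)
        - fderiv ℝ (fun y => g0 (p + q) (by omega) (q - 2) y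
            (stdBasis (p + q) i) (stdBasis (p + q) j)) x (stdBasis (p + q) k)) := by
  have hn : 4 ≤ p + q := by omega
  have hG : ∀ k : Fin (p + q),
      2 * g0 (p + q) hn (q - 2) x (Gamma (p + q) hn i j x) (stdBasis (p + q) k) =
        fderiv ℝ (fun y => g0 (p + q) hn (q - 2) y
            (stdBasis (p + q) j) (stdBasis (p + q) k)) x (stdBasis (p + q) i)
        + fderiv ℝ (fun y => g0 (p + q) hn (q - 2) y
            (stdBasis (p + q) i) (stdBasis (p + q) k)) x (stdBasis (p + q) j)
        - fderiv ℝ (fun y => g0 (p + q) hn (q - 2) y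
            (stdBasis (p + q) i) (stdBasis (p + q) j)) x (stdBasis (p + q) k) := by
    intro k
    rw [fderiv_g0, fderiv_g0, fderiv_g0, g0_std]
    simp only [Gamma, stdBasis_mk, Fin.val_mk]
    norm_num
    split_ifs <;> first | (exfalso; omega) | ring
  have huniq : ∀ G : Fin (p + q) → ℝ, (∀ k : Fin (p + q),
      2 * g0 (p + q) hn (q - 2) x G (stdBasis (p + q) k) =
        fderiv ℝ (fun y => g0 (p + q) hn (q - 2) y
            (stdBasis (p + q) j) (stdBasis (p + q) k)) x (stdBasis (p + q) i)
        + fderiv ℝ (fun y => g0 (p + q) hn (q - 2) y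
            (stdBasis (p + q) i) (stdBasis (p + q) k)) x (stdBasis (p + q) j)
        - fderiv ℝ (fun y => g0 (p + q) hn (q - 2) y
            (stdBasis (p + q) i) (stdBasis (p + q) j)) x (stdBasis (p + q) k)) →
      G = Gamma (p + q) hn i j x := by
    intro G hGk
    have hh : ∀ k : Fin (p + q),
        g0 (p + q) hn (q - 2) x G (stdBasis (p + q) k)
          = g0 (p + q) hn (q - 2) x (Gamma (p + q) hn i j x) (stdBasis (p + q) k) := by
      intro k
      have h1 := hGk k
      have h2 := hG k
      linarith
    funext l
    have e0 : G ⟨0, by omega⟩ = Gamma (p + q) hn i j x ⟨0, by omega⟩ := by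
      have := hh ⟨1, by omega⟩
      rw [g0_std, g0_std] at this
      simpa using this
    have e1 : G ⟨1, by omega⟩ = Gamma (p + q) hn i j x ⟨1, by omega⟩ := by
      have := hh ⟨0, by omega⟩
      rw [g0_std, g0_std] at this
      simp at this
      nlinarith [this, e0]
    have e2 : G ⟨2, by omega⟩ = Gamma (p + q) hn i j x ⟨2, by omega⟩ := by
      have := hh ⟨3, by omega⟩
      rw [g0_std, g0_std] at this
      simpa using this
    have e3 : G ⟨3, by omega⟩ = Gamma (p + q) hn i j x ⟨3, by omega⟩ := by
      have := hh ⟨2, by omega⟩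
      rw [g0_std, g0_std] at this
      simpa using this
    by_cases hl4 : 4 ≤ (l : ℕ)
    · have := hh l
      rw [g0_std, g0_std] at this
      have h0 : ¬(l : ℕ) = 0 := by omega
      have h1 : ¬(l : ℕ) = 1 := by omega
      have h2 : ¬(l : ℕ) = 2 := by omega
      have h3 : ¬(l : ℕ) = 3 := by omega
      rw [if_neg h0, if_neg h1, if_neg h2, if_neg h3] at this
      split_ifs at this <;> linarith
    · have h0 : (l : ℕ) = 0 ∨ (l : ℕ) = 1 ∨ (l : ℕ) = 2 ∨ (l : ℕ) = 3 := by omega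
      rcases h0 with h | h | h | h
      · rw [show l = ⟨0, by omega⟩ from Fin.ext h]; exact e0
      · rw [show l = ⟨1, by omega⟩ from Fin.ext h]; exact e1
      · rw [show l = ⟨2, by omega⟩ from Fin.ext h]; exact e2
      · rw [show l = ⟨3, by omega⟩ from Fin.ext h]; exact e3
  exact ⟨⟨Gamma (p + q) hn i j x, hG, huniq⟩, hG⟩
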